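/- An irreducible Markov chain on the nonnegative integers is recurrent if there exists N >= 1 such that the mean drift gamma_i is nonpositive for all states i >= N. -/

import Mathlib

open scoped ENNReal BigOperators
open Filter

/-- A discrete-time Markov chain on the nonnegative integers, given by its
row-stochastic transition matrix. -/
structure MarkovChain where
  p : ℕ → ℕ → ℝ≥0∞
  row_sum : ∀ i, ∑' j, p i j = 1

namespace MarkovChain

/-- `n`-step transition probabilities. -/
noncomputable def step (M : MarkovChain) : ℕ → ℕ → ℕ → ℝ≥0∞
  | 0, i, j => if i = j then 1 else 0
  | (n+1), i, j => ∑' k, M.p i k * M.step n k j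

/-- Irreducibility: every state reaches every other state with positive probability. -/
def Irreducible (M : MarkovChain) : Prop := ∀ i j, ∃ n, 0 < M.step n i j

/-- Probability, starting from `j`, that the chain reaches state `i` for the first
time at time `n` (time `0` counts iff `j = i`). -/
noncomputable def hitAt (M : MarkovChain) (i : ℕ) : ℕ → ℕ → ℝ≥0∞
  | 0, j => if j = i then 1 else 0
  | (n+1), j => if j = i then 0 else ∑' k, M.p j k * M.hitAt i n k

/-- Probability that the first return to `i` occurs at time `n + 1`. -/
noncomputable def firstReturn (M : MarkovChain) (i n : ℕ) : ℝ≥0∞ :=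
  ∑' k, M.p i k * M.hitAt i n k

/-- The chain is recurrent: return to each state is almost sure. -/
def Recurrent (M : MarkovChain) : Prop := ∀ i, ∑' n, M.firstReturn i n = 1

/-- The chain is positive recurrent: recurrent with finite expected return times. -/
def PositiveRecurrent (M : MarkovChain) : Prop :=
  M.Recurrent ∧ ∀ i, ∑' n : ℕ, ((n : ℝ≥0∞) + 1) * M.firstReturn i n < ⊤

/-- Null recurrent: recurrent but not positive recurrent. -/
def NullRecurrent (M : MarkovChain) : Prop := M.Recurrent ∧ ¬ M.PositiveRecurrent

/-- The chain is transient: return to each state happens with probability `< 1`. -/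
def Transient (M : MarkovChain) : Prop := ∀ i, ∑' n, M.firstReturn i n < 1

/-- Mean drift at state `i`. -/
noncomputable def drift (M : MarkovChain) (i : ℕ) : ℝ :=
  ∑' j, (M.p i j).toReal * ((j : ℝ) - i)

/-- The mean drift at `i` is finite (well-defined). -/
def DriftFinite (M : MarkovChain) (i : ℕ) : Prop :=
  Summable fun j => (M.p i j).toReal * ((j : ℝ) - i)

/-- Second-moment drift at state `i`. -/
noncomputable def secondMoment (M : MarkovChain) (i : ℕ) : ℝ :=
  ∑' j, (M.p i j).toReal * ((j : ℝ) - i) ^ 2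

/-- Downward uniformly bounded with bound `k`: no downward jumps longer than `k`. -/
def DownwardBounded (M : MarkovChain) (k : ℕ) : Prop :=
  ∀ i j, j + k < i → M.p i j = 0

/-- Uniformly bounded with bound `d`: no jumps longer than `d`. -/
def UniformlyBounded (M : MarkovChain) (d : ℕ) : Prop :=
  ∀ i j : ℕ, (d : ℤ) < |(i : ℤ) - j| → M.p i j = 0

end MarkovChain

/-! Let `u j` be the probability, starting from `j`, of never visiting `i`; it is subharmonic off
`i`. Fix `K > i` with `K ≥ N`. By the drift condition `j ↦ j / L` is superharmonic on the window
`[K, L)`, which the chain leaves almost surely by irreducibility, so the maximum principle gives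
`u j ≤ max_{k < K} u k + j / L`; letting `L → ∞`, `sup u = max_{k < K} u k`. From each of the
finitely many states below `K` the chain visits `i` within `m` steps with probability at least
`1 - c`, hence `sup u ≤ c * sup u` and `u = 0`. -/

namespace MarkovChain

variable (M : MarkovChain)

lemma p_ne_top (j k : ℕ) : M.p j k ≠ ⊤ :=
  ne_top_of_le_ne_top ENNReal.one_ne_top (M.row_sum j ▸ ENNReal.le_tsum k)

/-- Probability, starting from `j`, of staying outside `A` at all times `0, …, n`. -/
noncomputable def avoid (A : ℕ → Prop) [DecidablePred A] : ℕ → ℕ → ℝ≥0∞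
  | 0, j => if A j then 0 else 1
  | n + 1, j => if A j then 0 else ∑' m, M.p j m * avoid A n m

noncomputable def avoidForever (A : ℕ → Prop) [DecidablePred A] (j : ℕ) : ℝ≥0∞ :=
  ⨅ n, M.avoid A n j

def SubharmonicOff (A : ℕ → Prop) (h : ℕ → ℝ≥0∞) : Prop :=
  ∀ j, ¬ A j → h j ≤ ∑' m, M.p j m * h m

def SuperharmonicOff (A : ℕ → Prop) (g : ℕ → ℝ≥0∞) : Prop :=
  ∀ j, ¬ A j → ∑' m, M.p j m * g m ≤ g j

variable {M}

lemma SubharmonicOff.mono {A B : ℕ → Prop} {h : ℕ → ℝ≥0∞} (hh : M.SubharmonicOff B h)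
    (hBA : ∀ x, B x → A x) : M.SubharmonicOff A h :=
  fun j hj => hh j fun hB => hj (hBA j hB)

variable (M)

lemma tsum_p_mul_le_of_le {f g : ℕ → ℝ≥0∞} (hfg : ∀ m, f m ≤ g m) (j : ℕ) :
    ∑' m, M.p j m * f m ≤ ∑' m, M.p j m * g m :=
  ENNReal.tsum_le_tsum fun m => mul_le_mul_right (hfg m) _

lemma tsum_p_mul_const (j : ℕ) (c : ℝ≥0∞) : ∑' m, M.p j m * c = c := by
  rw [ENNReal.tsum_mul_right, M.row_sum, one_mul]

section Avoid

variable (A : ℕ → Prop) [DecidablePred A]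

lemma avoid_of_mem {j : ℕ} (hj : A j) (n : ℕ) : M.avoid A n j = 0 := by
  cases n <;> simp [avoid, hj]

lemma avoid_succ_le (n j : ℕ) : M.avoid A (n + 1) j ≤ ∑' m, M.p j m * M.avoid A n m := by
  by_cases hj : A j <;> simp [avoid, hj]

lemma avoid_le_one : ∀ n j, M.avoid A n j ≤ 1
  | 0, j => by by_cases hj : A j <;> simp [avoid, hj]
  | n + 1, j => (M.avoid_succ_le A n j).trans <|
      (M.tsum_p_mul_le_of_le (avoid_le_one n) j).trans_eq (M.tsum_p_mul_const j 1)

lemma avoid_succ_le_self : ∀ n j, M.avoid A (n + 1) j ≤ M.avoid A n j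
  | 0, j => by
      by_cases hj : A j
      · simp [avoid, hj]
      · exact (M.avoid_le_one A 1 j).trans_eq (by simp [avoid, hj])
  | n + 1, j => by
      by_cases hj : A j
      · simp [avoid, hj]
      · simpa only [avoid, if_neg hj] using M.tsum_p_mul_le_of_le (avoid_succ_le_self n) j

lemma avoid_antitone (j : ℕ) : Antitone fun n => M.avoid A n j :=
  antitone_nat_of_succ_le fun n => M.avoid_succ_le_self A n j

lemma avoidForever_of_mem {j : ℕ} (hj : A j) : M.avoidForever A j = 0 :=
  le_antisymm ((iInf_le _ 0).trans_eq (M.avoid_of_mem A hj 0)) bot_le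

lemma avoidForever_le_one (j : ℕ) : M.avoidForever A j ≤ 1 :=
  (iInf_le _ 0).trans (M.avoid_le_one A 0 j)

/-- Monotone convergence for decreasing sequences, via the Lebesgue integral against counting
measure. -/
lemma subharmonicOff_avoidForever : M.SubharmonicOff A (M.avoidForever A) := by
  intro j hj
  have hmct : ∑' m, M.p j m * M.avoidForever A m = ⨅ n, ∑' m, M.p j m * M.avoid A n m := by
    have := MeasureTheory.lintegral_iInf (μ := MeasureTheory.Measure.count)
      (f := fun n m => M.p j m * M.avoid A n m) (fun _ => measurable_of_countable _)
      (fun a b hab m => mul_le_mul_right (M.avoid_antitone A m hab) _)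
      (by
        rw [MeasureTheory.lintegral_count]
        exact ne_top_of_le_ne_top ENNReal.one_ne_top
          ((M.tsum_p_mul_le_of_le (M.avoid_le_one A 0) j).trans_eq (M.tsum_p_mul_const j 1)))
    simp only [MeasureTheory.lintegral_count] at this
    rw [← this]
    simp only [avoidForever, ENNReal.mul_iInf fun h => absurd h (M.p_ne_top j _)]
  rw [hmct]
  exact le_iInf fun n => (iInf_le _ (n + 1)).trans_eq (by simp [avoid, hj])

/-- Maximum principle for the chain stopped on entering `A`. -/
lemma le_add_mul_avoid {h g : ℕ → ℝ≥0∞} {s : ℝ≥0∞} (hh : M.SubharmonicOff A h)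
    (hg : M.SuperharmonicOff A g) (hA : ∀ j, A j → h j ≤ g j) (hs : ∀ j, h j ≤ s) :
    ∀ n j, h j ≤ g j + s * M.avoid A n j
  | 0, j => by
      by_cases hj : A j
      · exact (hA j hj).trans le_self_add
      · simpa [avoid, hj] using (hs j).trans le_add_self
  | n + 1, j => by
      by_cases hj : A j
      · exact (hA j hj).trans le_self_add
      · calc h j ≤ ∑' m, M.p j m * h m := hh j hj
          _ ≤ ∑' m, M.p j m * (g m + s * M.avoid A n m) :=
            M.tsum_p_mul_le_of_le (le_add_mul_avoid hh hg hA hs n) j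
          _ = ∑' m, M.p j m * g m + s * ∑' m, M.p j m * M.avoid A n m := by
            simp only [mul_add, ENNReal.tsum_add, mul_left_comm _ s, ENNReal.tsum_mul_left]
          _ ≤ g j + s * M.avoid A (n + 1) j := by
            simp only [avoid, if_neg hj]
            gcongr
            exact hg j hj

lemma le_of_avoidForever_eq_zero {h g : ℕ → ℝ≥0∞} (hh : M.SubharmonicOff A h)
    (hg : M.SuperharmonicOff A g) (hA : ∀ j, A j → h j ≤ g j) (h1 : ∀ j, h j ≤ 1)
    {j : ℕ} (hj : M.avoidForever A j = 0) : h j ≤ g j := by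
  have := le_iInf fun n => (M.le_add_mul_avoid A hh hg hA h1 n j).trans_eq (by rw [one_mul])
  rwa [← ENNReal.add_iInf, ← avoidForever, hj, add_zero] at this

lemma step_add_avoid_le_one {a : ℕ} (ha : A a) : ∀ n k, M.step n k a + M.avoid A n k ≤ 1
  | 0, k => by
      by_cases hk : k = a
      · simp [step, hk, M.avoid_of_mem A ha]
      · by_cases hAk : A k <;> simp [step, avoid, hk, hAk]
  | n + 1, k => calc
      M.step (n + 1) k a + M.avoid A (n + 1) k
          ≤ ∑' m, M.p k m * M.step n m a + ∑' m, M.p k m * M.avoid A n m :=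
        add_le_add le_rfl (M.avoid_succ_le A n k)
      _ = ∑' m, M.p k m * (M.step n m a + M.avoid A n m) := by
        simp only [mul_add, ENNReal.tsum_add]
      _ ≤ 1 := (M.tsum_p_mul_le_of_le (step_add_avoid_le_one ha n) k).trans_eq
        (M.tsum_p_mul_const k 1)

lemma exists_avoid_lt_one {k : ℕ} (h : ∃ n a, A a ∧ 0 < M.step n k a) :
    ∃ n, M.avoid A n k < 1 := by
  obtain ⟨n, a, ha, hpos⟩ := h
  refine ⟨n, lt_of_lt_of_le ?_ (add_comm (M.avoid A n k) _ ▸ M.step_add_avoid_le_one A ha n k)⟩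
  exact ENNReal.lt_add_right (ne_top_of_le_ne_top ENNReal.one_ne_top (M.avoid_le_one A n k))
    hpos.ne'

lemma exists_avoid_le_of_finset (S : Finset ℕ)
    (hreach : ∀ k ∈ S, ∃ n a, A a ∧ 0 < M.step n k a) :
    ∃ m, ∃ c < 1, ∀ k ∈ S, M.avoid A m k ≤ c := by
  choose! n hn using fun k hk => M.exists_avoid_lt_one A (hreach k hk)
  refine ⟨S.sup n, S.sup fun k => M.avoid A (S.sup n) k, ?_, fun k hk => Finset.le_sup hk⟩
  rw [Finset.sup_lt_iff (by simp)]
  exact fun k hk => (M.avoid_antitone A k (Finset.le_sup hk)).trans_lt (hn k hk)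

lemma avoid_add_le_mul {m : ℕ} {c : ℝ≥0∞} (hc : ∀ k, ¬ A k → M.avoid A m k ≤ c) :
    ∀ n j, M.avoid A (n + m) j ≤ c * M.avoid A n j
  | 0, j => by
      by_cases hj : A j
      · simp [M.avoid_of_mem A hj]
      · simpa [avoid, hj] using hc j hj
  | n + 1, j => by
      by_cases hj : A j
      · simp [M.avoid_of_mem A hj]
      · rw [Nat.add_right_comm]
        simp only [avoid, if_neg hj, ← ENNReal.tsum_mul_left, mul_left_comm c]
        exact M.tsum_p_mul_le_of_le (avoid_add_le_mul hc n) j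

/-- From every state of the finite set `¬ A` the chain enters `A` within `m` steps with probability
at least `1 - c`, so the probability of avoiding `A` decays like `c ^ k`. -/
lemma avoidForever_eq_zero_of_finite {L : ℕ} (hfin : ∀ j, ¬ A j → j < L)
    (hreach : ∀ k, ∃ n a, A a ∧ 0 < M.step n k a) (j : ℕ) : M.avoidForever A j = 0 := by
  obtain ⟨m, c, hc1, hc⟩ := M.exists_avoid_le_of_finset A (Finset.range L) fun k _ => hreach k
  have hpow : ∀ k, M.avoid A (k * m) j ≤ c ^ k := by
    intro k
    induction k with
    | zero => simpa using M.avoid_le_one A 0 j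
    | succ k ih => calc
        M.avoid A ((k + 1) * m) j = M.avoid A (k * m + m) j := by rw [Nat.succ_mul]
        _ ≤ c * M.avoid A (k * m) j :=
          M.avoid_add_le_mul A (fun k hk => hc k (Finset.mem_range.2 (hfin k hk))) _ j
        _ ≤ c ^ (k + 1) := by rw [pow_succ']; gcongr
  exact le_antisymm (ge_of_tendsto' (ENNReal.tendsto_pow_atTop_nhds_zero_of_lt_one hc1)
    fun k => (iInf_le _ _).trans (hpow k)) bot_le

end Avoid

lemma superharmonicOff_const_add_mul {A : ℕ → Prop}
    (hmean : ∀ j, ¬ A j → ∑' k, M.p j k * k ≤ j) (c a : ℝ≥0∞) :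
    M.SuperharmonicOff A fun j => c + a * j := by
  intro j hj
  simp only [mul_add, ENNReal.tsum_add, M.tsum_p_mul_const, mul_left_comm _ a,
    ENNReal.tsum_mul_left]
  gcongr
  exact hmean j hj

lemma tsum_p_mul_le_of_drift_nonpos {l : ℕ} (hfin : M.DriftFinite l) (hd : M.drift l ≤ 0) :
    ∑' k, M.p l k * k ≤ l := by
  have hp : HasSum (fun k => (M.p l k).toReal) 1 := by
    have := ENNReal.hasSum_toReal (f := M.p l) (by simp [M.row_sum])
    rwa [← ENNReal.tsum_toReal_eq (M.p_ne_top l), M.row_sum, ENNReal.toReal_one] at this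
  have hmean : HasSum (fun k => (M.p l k).toReal * k) (M.drift l + l) := by
    convert hfin.hasSum.add (hp.mul_right (l : ℝ)) using 1 <;> simp [drift, mul_sub]
  calc ∑' k, M.p l k * k = ∑' k, ENNReal.ofReal ((M.p l k).toReal * k) := by
        congr 1 with k
        rw [ENNReal.ofReal_mul ENNReal.toReal_nonneg, ENNReal.ofReal_toReal (M.p_ne_top l k),
          ENNReal.ofReal_natCast]
    _ = ENNReal.ofReal (M.drift l + l) :=
        (ENNReal.ofReal_tsum_of_nonneg (fun k => by positivity) hmean.summable).symm.trans
          (congrArg _ hmean.tsum_eq)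
    _ ≤ l := by
        rw [← ENNReal.ofReal_natCast]
        exact ENNReal.ofReal_le_ofReal (by linarith)

lemma sum_hitAt_add_avoid (i : ℕ) :
    ∀ n j, ∑ t ∈ Finset.range (n + 1), M.hitAt i t j + M.avoid (· = i) n j = 1
  | 0, j => by by_cases h : j = i <;> simp [hitAt, avoid, h]
  | n + 1, j => by
      by_cases h : j = i
      · simp [Finset.sum_range_succ', hitAt, h, M.avoid_of_mem (· = i) rfl]
      · calc ∑ t ∈ Finset.range (n + 2), M.hitAt i t j + M.avoid (· = i) (n + 1) j
            = ∑' k, M.p j k *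
                (∑ t ∈ Finset.range (n + 1), M.hitAt i t k + M.avoid (· = i) n k) := by
              simp only [Finset.sum_range_succ', hitAt, avoid, if_neg h, add_zero, mul_add,
                Finset.mul_sum, ENNReal.tsum_add,
                Summable.tsum_finsetSum fun _ _ => ENNReal.summable]
          _ = 1 := by simp only [sum_hitAt_add_avoid i n, M.tsum_p_mul_const]

lemma tsum_hitAt_eq_one {i j : ℕ} (hj : M.avoidForever (· = i) j = 0) :
    ∑' t, M.hitAt i t j = 1 := by
  have hpartial (n : ℕ) : ∑ t ∈ Finset.range (n + 1), M.hitAt i t j = 1 - M.avoid (· = i) n j :=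
    ENNReal.eq_sub_of_add_eq (ne_top_of_le_ne_top ENNReal.one_ne_top (M.avoid_le_one _ n j))
      (M.sum_hitAt_add_avoid i n j)
  rw [ENNReal.tsum_eq_iSup_nat' (tendsto_add_atTop_nat 1)]
  simp only [hpartial, ← ENNReal.sub_iInf]
  rw [show ⨅ n, M.avoid (· = i) n j = 0 from hj, tsub_zero]

lemma avoidForever_le_sup_range (hirr : M.Irreducible) {N K i : ℕ}
    (hmean : ∀ j, N ≤ j → ∑' k, M.p j k * k ≤ j) (hNK : N ≤ K) (hiK : i < K) (j : ℕ) :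
    M.avoidForever (· = i) j ≤ (Finset.range K).sup (M.avoidForever (· = i)) := by
  set u := M.avoidForever (· = i)
  set a := (Finset.range K).sup u
  have hL : ∀ L, K ≤ L → u j ≤ a + (L : ℝ≥0∞)⁻¹ * j := by
    intro L hKL
    refine M.le_of_avoidForever_eq_zero (fun x => x < K ∨ L ≤ x)
      ((M.subharmonicOff_avoidForever _).mono fun x hx => Or.inl (by omega))
      (M.superharmonicOff_const_add_mul (fun x hx => hmean x (by omega)) _ _)
      (fun x hx => ?_) (M.avoidForever_le_one _)
      (M.avoidForever_eq_zero_of_finite _ (L := L) (fun x hx => by omega)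
        (fun k => (hirr k i).imp fun n hn => ⟨i, Or.inl hiK, hn⟩) j)
    rcases hx with hx | hx
    · exact (Finset.le_sup (Finset.mem_range.2 hx)).trans le_self_add
    · refine (M.avoidForever_le_one _ x).trans (le_add_left ?_)
      calc (1 : ℝ≥0∞) = (L : ℝ≥0∞)⁻¹ * L :=
            (ENNReal.inv_mul_cancel (by simp; omega) (ENNReal.natCast_ne_top L)).symm
        _ ≤ (L : ℝ≥0∞)⁻¹ * x := by gcongr
  refine ge_of_tendsto ?_ ((eventually_ge_atTop K).mono hL)
  simpa using tendsto_const_nhds.add (ENNReal.Tendsto.mul_const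
    ENNReal.tendsto_inv_nat_nhds_zero (Or.inr (ENNReal.natCast_ne_top j)))

lemma avoidForever_eq_zero_of_le_sup_range (hirr : M.Irreducible) {i K : ℕ}
    (hK : ∀ j, M.avoidForever (· = i) j ≤ (Finset.range K).sup (M.avoidForever (· = i)))
    (j : ℕ) : M.avoidForever (· = i) j = 0 := by
  set u := M.avoidForever (· = i)
  set S := ⨆ j, u j
  obtain ⟨m, c, hc1, hc⟩ := M.exists_avoid_le_of_finset (· = i) (Finset.range K)
    fun k _ => (hirr k i).imp fun n hn => ⟨i, rfl, hn⟩
  have hS_le : S ≤ c * S := iSup_le fun j => (hK j).trans <| Finset.sup_le fun k hk => calc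
    u k ≤ 0 + S * M.avoid (· = i) m k :=
      M.le_add_mul_avoid (· = i) (M.subharmonicOff_avoidForever _) (g := fun _ => 0)
        (fun _ _ => by simp) (fun x hx => (M.avoidForever_of_mem (· = i) hx).le) (le_iSup u) m k
    _ ≤ c * S := by rw [zero_add, mul_comm]; gcongr; exact hc k hk
  have hS : S = 0 := by
    by_contra hS0
    have hS_top : S ≠ ⊤ :=
      ne_top_of_le_ne_top ENNReal.one_ne_top (iSup_le (M.avoidForever_le_one _))
    exact (hS_le.trans_lt ((ENNReal.mul_lt_mul_iff_left hS0 hS_top).2 hc1)).ne (one_mul S).symm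
  exact le_antisymm ((le_iSup u j).trans hS.le) bot_le

end MarkovChain

theorem stmt2_general (M : MarkovChain) (hirr : M.Irreducible) (N : ℕ)
    (hfin : ∀ i, N ≤ i → M.DriftFinite i)
    (hdrift : ∀ i, N ≤ i → M.drift i ≤ 0) :
    M.Recurrent := by
  intro i
  have hmean (j : ℕ) (hj : N ≤ j) : ∑' k, M.p j k * k ≤ j :=
    M.tsum_p_mul_le_of_drift_nonpos (hfin j hj) (hdrift j hj)
  have hhit (k : ℕ) : ∑' n, M.hitAt i n k = 1 :=
    M.tsum_hitAt_eq_one <| M.avoidForever_eq_zero_of_le_sup_range hirr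
      (M.avoidForever_le_sup_range hirr hmean (le_max_left N (i + 1))
        (lt_max_of_lt_right (Nat.lt_succ_self i))) k
  calc ∑' n, M.firstReturn i n = ∑' k, M.p i k * ∑' n, M.hitAt i n k := by
        simp only [MarkovChain.firstReturn, ENNReal.tsum_mul_left.symm]
        exact ENNReal.tsum_comm
    _ = 1 := by simp only [hhit, M.tsum_p_mul_const]

/-- an irreducible chain whose mean drifts are (finite and)
nonpositive for all `i ≥ N` is recurrent. -/
theorem stmt2 (M : MarkovChain) (hirr : M.Irreducible) (N : ℕ) (hN : 1 ≤ N)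
    (hfin : ∀ i, N ≤ i → M.DriftFinite i)
    (hdrift : ∀ i, N ≤ i → M.drift i ≤ 0) :
    M.Recurrent :=
  stmt2_general M hirr N hfin hdrift
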